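/- Let φ : A* → M be a monoid homomorphism, c ∈ A, B = A \ {c}, and φ_c : B* → M the restriction of φ. Let T = φ_c(B*) ⊆ M be viewed as a finite alphabet, let σ : (B*c)* → T* be the substitution mapping v₁c v₂c ⋯ v_k c (k ≥ 0, v_i ∈ B*) to φ_c(v₁)φ_c(v₂)⋯φ_c(v_k), and let ψ : T* → M_{φ(c)} be the monoid homomorphism into the local divisor of M at φ(c) determined by ψ(φ_c(v)) = φ(cvc) on letters. Then for every word w = v₁c ⋯ v_k c with k ≥ 0 and v_i ∈ B*, one has ψ(σ(w)) = φ(cw), where the products on the left are taken with the local divisor multiplication ∘. -/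

import Mathlib

variable {M : Type*} [Monoid M]

/-- The underlying set `cM ∩ Mc` of the local divisor of `M` at `c`. -/
def LD (M : Type*) [Monoid M] (c : M) : Set M :=
  {z | (∃ y, z = c * y) ∧ (∃ x, z = x * c)}

namespace LD

variable {c : M}

/-- The multiplication `(xc) ∘ (cy) = xcy` of the local divisor at `c`,
defined via a choice of `x` with `z₁ = x * c`. -/
noncomputable def mul (z₁ z₂ : LD M c) : LD M c := by
  refine ⟨z₁.2.2.choose * (z₂ : M), ?_, ?_⟩
  · obtain ⟨y₁, hy₁⟩ := z₁.2.1
    obtain ⟨y₂, hy₂⟩ := z₂.2.1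
    refine ⟨y₁ * y₂, ?_⟩
    calc z₁.2.2.choose * (z₂ : M) = z₁.2.2.choose * (c * y₂) := by rw [← hy₂]
      _ = z₁.2.2.choose * c * y₂ := (mul_assoc _ _ _).symm
      _ = (z₁ : M) * y₂ := by rw [← z₁.2.2.choose_spec]
      _ = c * y₁ * y₂ := by rw [hy₁]
      _ = c * (y₁ * y₂) := mul_assoc _ _ _
  · obtain ⟨x₂, hx₂⟩ := z₂.2.2
    exact ⟨z₁.2.2.choose * x₂, by rw [hx₂, mul_assoc]⟩

noncomputable instance : Mul (LD M c) := ⟨mul⟩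

instance : One (LD M c) := ⟨⟨c, ⟨1, (mul_one c).symm⟩, ⟨1, (one_mul c).symm⟩⟩⟩

@[simp] theorem one_val : ((1 : LD M c) : M) = c := rfl

/-- The multiplication of the local divisor is well defined:
if `z₁ = x * c` then `z₁ ∘ z₂ = x * z₂`. -/
theorem mul_val (z₁ z₂ : LD M c) (x : M) (hx : (z₁ : M) = x * c) :
    ((z₁ * z₂ : LD M c) : M) = x * (z₂ : M) := by
  show z₁.2.2.choose * (z₂ : M) = x * (z₂ : M)
  obtain ⟨y₂, hy₂⟩ := z₂.2.1
  calc z₁.2.2.choose * (z₂ : M) = z₁.2.2.choose * (c * y₂) := by rw [← hy₂]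
    _ = z₁.2.2.choose * c * y₂ := (mul_assoc _ _ _).symm
    _ = x * c * y₂ := by rw [← z₁.2.2.choose_spec, hx]
    _ = x * (c * y₂) := mul_assoc _ _ _
    _ = x * (z₂ : M) := by rw [← hy₂]

/-- The local divisor `M_c = (cM ∩ Mc, ∘, c)` of the monoid `M` at `c`. -/
noncomputable instance monoid : Monoid (LD M c) where
  mul_assoc a b d := by
    obtain ⟨xa, hxa⟩ := a.2.2
    have hab : ((a * b : LD M c) : M) = xa * (b : M) := mul_val a b xa hxa
    obtain ⟨xb, hxb⟩ := b.2.2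
    have hab' : ((a * b : LD M c) : M) = (xa * xb) * c := by rw [hab, hxb, mul_assoc]
    apply Subtype.ext
    rw [mul_val (a * b) d (xa * xb) hab', mul_val a (b * d) xa hxa,
      mul_val b d xb hxb, mul_assoc]
  one_mul a := Subtype.ext <| by
    rw [mul_val 1 a 1 (one_mul c).symm, one_mul]
  mul_one a := Subtype.ext <| by
    obtain ⟨xa, hxa⟩ := a.2.2
    rw [mul_val a 1 xa hxa, one_val, ← hxa]

theorem coe_list_prod_map {ι : Type*} (f : ι → LD M c) (g : ι → M)
    (hfg : ∀ i, (f i : M) = c * g i * c) (l : List ι) :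
    ((l.map f).prod : M) = c * (l.map fun i => g i * c).prod := by
  induction l with
  | nil => simp
  | cons i l ih =>
    rw [List.map_cons, List.prod_cons, mul_val _ _ _ (hfg i), ih, List.map_cons, List.prod_cons,
      mul_assoc, mul_assoc]

end LD

/-- The image `T = φ_c(B*)` of the set of words avoiding the letter `c` under `φ`,
used as a finite alphabet. -/
def Tset {A M : Type*} [Monoid M] (φ : FreeMonoid A →* M) (c : A) : Set M :=
  {m | ∃ v : FreeMonoid A, (∀ a ∈ v, a ≠ c) ∧ φ v = m}

theorem psi_sigma_eq_general {A : Type*} (φ : FreeMonoid A →* M) (c : A)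
    (ψ : FreeMonoid (Tset φ c) →* LD M (φ (FreeMonoid.of c)))
    (hψ : ∀ t : Tset φ c,
      ((ψ (FreeMonoid.of t) : LD M (φ (FreeMonoid.of c))) : M) =
        φ (FreeMonoid.of c) * (t : M) * φ (FreeMonoid.of c))
    (L : List {v : FreeMonoid A // ∀ a ∈ v, a ≠ c}) :
    ((ψ (FreeMonoid.ofList
        (L.map fun v => (⟨φ v.val, v.val, v.2, rfl⟩ : Tset φ c))) :
          LD M (φ (FreeMonoid.of c))) : M) =
      φ (FreeMonoid.of c * (L.map fun v => v.val * FreeMonoid.of c).prod) := by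
  rw [← FreeMonoid.lift_restrict ψ, FreeMonoid.lift_ofList, List.map_map,
    LD.coe_list_prod_map _ (fun v => φ v.val) (fun v => hψ _) L, map_mul, map_list_prod,
    List.map_map]
  simp only [Function.comp_def, map_mul]

/-- Let `φ : A* → M` be a homomorphism, `c ∈ A`, `B = A \ {c}`, `φ_c` the restriction of `φ`
to `B*`, and `T = φ_c(B*)` viewed as an alphabet.  Let `ψ : T* → M_{φ(c)}` be the
homomorphism into the local divisor of `M` at `φ(c)` with `ψ(φ_c(v)) = φ(cvc)` on letters.
Then for every word `w = v₁c ⋯ v_k c` (`k ≥ 0`, `v_i ∈ B*`), with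
`σ(w) = φ_c(v₁) ⋯ φ_c(v_k) ∈ T*`, one has `ψ(σ(w)) = φ(cw)`, the products on the left
being taken with the local divisor multiplication `∘`. -/
theorem psi_sigma_eq {A : Type*} [Finite A] (φ : FreeMonoid A →* M) (c : A)
    (ψ : FreeMonoid (Tset φ c) →* LD M (φ (FreeMonoid.of c)))
    (hψ : ∀ t : Tset φ c,
      ((ψ (FreeMonoid.of t) : LD M (φ (FreeMonoid.of c))) : M) =
        φ (FreeMonoid.of c) * (t : M) * φ (FreeMonoid.of c))
    (L : List {v : FreeMonoid A // ∀ a ∈ v, a ≠ c}) :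
    ((ψ (FreeMonoid.ofList
        (L.map fun v => (⟨φ v.val, v.val, v.2, rfl⟩ : Tset φ c))) :
          LD M (φ (FreeMonoid.of c))) : M) =
      φ (FreeMonoid.of c * (L.map fun v => v.val * FreeMonoid.of c).prod) :=
  psi_sigma_eq_general φ c ψ hψ L
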